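/- For all natural numbers b, c ≥ 0, the following identity holds in M₂(R): 2^{b+c+1}·(xu − yv)·uᵇvᶜ = [x,y,y]·(ad y)^{2b}·(ad x ad y)ᶜ. -/

import Mathlib

open Matrix MvPolynomial

noncomputable section

variable (K : Type*) [Field K] [CharZero K]

/-- The first generic traceless 2×2 matrix `x = !![x₁₁, x₁₂; x₂₁, -x₁₁]` over
`R = K[x₁₁,x₁₂,x₂₁,y₁₁,y₁₂,y₂₁]`, realized as `MvPolynomial (Fin 6) K` with
`x₁₁ = X 0, x₁₂ = X 1, x₂₁ = X 2, y₁₁ = X 3, y₁₂ = X 4, y₂₁ = X 5`. -/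
def x : Matrix (Fin 2) (Fin 2) (MvPolynomial (Fin 6) K) := !![X 0, X 1; X 2, -(X 0)]

/-- The second generic traceless 2×2 matrix `y = !![y₁₁, y₁₂; y₂₁, -y₁₁]`. -/
def y : Matrix (Fin 2) (Fin 2) (MvPolynomial (Fin 6) K) := !![X 3, X 4; X 5, -(X 3)]

/-- `t = tr(x²)`. -/
def t : MvPolynomial (Fin 6) K := (x K * x K).trace

/-- `u = tr(y²)`. -/
def u : MvPolynomial (Fin 6) K := (y K * y K).trace

/-- `v = tr(xy)`. -/
def v : MvPolynomial (Fin 6) K := (x K * y K).trace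

/-- The right adjoint action `z ↦ z(ad w) = [z,w]`. -/
def ad (w z : Matrix (Fin 2) (Fin 2) (MvPolynomial (Fin 6) K)) :
    Matrix (Fin 2) (Fin 2) (MvPolynomial (Fin 6) K) := ⁅z, w⁆

/-!
For traceless `a b ∈ M₂(R)` one has `2b² = tr(b²)` and `ab + ba = tr(ab)`, whence
`[a,b,b] = 2 (tr(b²) a - tr(ab) b)`. Thus `[x,y,y] = 2w` with `w = xu - yv`. Since `w` is
traceless and `tr(wy) = uv - vu = 0`, the same identity gives `[w,y,y] = 2u w`; and
`[w,x] = v [x,y]` gives `[w,x,y] = 2v w`. So `w` is an eigenvector of `(ad y)²` and of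
`ad x ad y`, with eigenvalues `2u` and `2v`.
-/

theorem Function.iterate_smul_of_apply_smul {R M : Type*} [Monoid R] [MulAction R M]
    {f : M → M} {w : M} {r : R} (hf : ∀ s : R, f (s • w) = (r * s) • w) (n : ℕ) (s : R) :
    f^[n] (s • w) = (r ^ n * s) • w := by
  induction n with
  | zero => simp
  | succ n ih => rw [Function.iterate_succ_apply', ih, hf, pow_succ', mul_assoc]

def w (F : Type*) [Field F] : Matrix (Fin 2) (Fin 2) (MvPolynomial (Fin 6) F) :=
  u F • x F - v F • y F

section

attribute [local instance] LieRing.ofAssociativeRing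

theorem Matrix.lie_lie_self_of_trace_eq_zero {R : Type*} [CommRing R]
    {a b : Matrix (Fin 2) (Fin 2) R} (ha : a.trace = 0) (hb : b.trace = 0) :
    ⁅⁅a, b⁆, b⁆ = (2 : R) • ((b * b).trace • a - (a * b).trace • b) := by
  have ha' : a 1 1 = -a 0 0 := by
    simp only [trace, diag, Fin.sum_univ_two] at ha; linear_combination ha
  have hb' : b 1 1 = -b 0 0 := by
    simp only [trace, diag, Fin.sum_univ_two] at hb; linear_combination hb
  ext i j
  fin_cases i <;> fin_cases j <;>
    simp [Ring.lie_def, mul_apply, trace, Fin.sum_univ_two, ha', hb'] <;> ring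

variable {F : Type*} [Field F]

theorem trace_x : (x F).trace = 0 := by simp [x, trace]

theorem trace_y : (y F).trace = 0 := by simp [y, trace]

theorem trace_w : (w F).trace = 0 := by simp [w, trace_x, trace_y]

theorem trace_w_mul_y : (w F * y F).trace = 0 := by simp [w, sub_mul, u, v, mul_comm]

theorem lie_lie_x_y_y : ⁅⁅x F, y F⁆, y F⁆ = (2 : MvPolynomial (Fin 6) F) • w F :=
  lie_lie_self_of_trace_eq_zero trace_x trace_y

theorem lie_lie_w_y_y : ⁅⁅w F, y F⁆, y F⁆ = (2 * u F) • w F := by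
  rw [lie_lie_self_of_trace_eq_zero trace_w trace_y, trace_w_mul_y, zero_smul, sub_zero,
    smul_smul, u]

theorem lie_w_x : ⁅w F, x F⁆ = v F • ⁅x F, y F⁆ := by
  rw [w, sub_lie, smul_lie, smul_lie, lie_self, smul_zero, zero_sub, ← lie_skew, smul_neg, neg_neg]

theorem ad_y_iterate_two_smul_w (s : MvPolynomial (Fin 6) F) :
    (ad F (y F))^[2] (s • w F) = (2 * u F * s) • w F := by
  rw [Function.iterate_succ_apply, Function.iterate_one, ad, ad, smul_lie, smul_lie, lie_lie_w_y_y,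
    smul_smul, mul_comm s]

theorem ad_y_comp_ad_x_smul_w (s : MvPolynomial (Fin 6) F) :
    (ad F (y F) ∘ ad F (x F)) (s • w F) = (2 * v F * s) • w F := by
  rw [Function.comp_apply, ad, ad, smul_lie, lie_w_x, smul_lie, smul_lie, lie_lie_x_y_y,
    smul_smul, smul_smul]
  congr 1
  ring

end

/-- For `b, c ≥ 0`: `2^{b+c+1}(xu − yv)uᵇvᶜ = [x,y,y](ad y)^{2b}(ad x ad y)ᶜ`. -/
theorem stmt_8 (b c : ℕ) :
    ((2 : MvPolynomial (Fin 6) K) ^ (b + c + 1) * u K ^ b * v K ^ c) •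
        (u K • x K - v K • y K) =
      (ad K (y K) ∘ ad K (x K))^[c] ((ad K (y K))^[2 * b] ⁅⁅x K, y K⁆, y K⁆) := by
  rw [lie_lie_x_y_y, Function.iterate_mul,
    Function.iterate_smul_of_apply_smul ad_y_iterate_two_smul_w,
    Function.iterate_smul_of_apply_smul ad_y_comp_ad_x_smul_w, w]
  congr 1
  ring
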